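/- Let V ∈ ℝ^{d×n} satisfy V V^T = I_d, let T ⊆ [n] with eigenvalues μ_1 ≥ μ_2 ≥ ... ≥ μ_d of V_T V_T^T, and let E_b ∈ ℝ^{d×p} have as columns orthonormal eigenvectors of V_T V_T^T corresponding to the p largest eigenvalues. Let D ⊆ T with |D| = p be such that V_D has full column rank and E_b^T V_D ∈ ℝ^{p×p} is invertible, and let P_D := V_D (V_D^T V_D)^{-1} V_D^T. Then tr[(I_d − P_D) V_T V_T^T] ≤ (1 + ‖(E_b^T V_D)^{-1}‖_op²) · Σ_{i=p+1}^d μ_i. -/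

import Mathlib

open Matrix BigOperators

/-- The submatrix of `V` consisting of the columns indexed by `S`. -/
def cols {d n : ℕ} (V : Matrix (Fin d) (Fin n) ℝ) (S : Finset (Fin n)) :
    Matrix (Fin d) {j // j ∈ S} ℝ :=
  Matrix.of fun i j => V i j

/-- The square of the operator (spectral) norm: `‖M‖_op² = max_{‖x‖=1} ‖Mx‖²`. -/
noncomputable def opNormSq {m k : Type*} [Fintype m] [Fintype k]
    (M : Matrix m k ℝ) : ℝ :=
  ⨆ x : {x : k → ℝ // ∑ j, x j ^ 2 = 1}, ∑ i, (M.mulVec x.1 i) ^ 2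

/-- The orthogonal projection onto the column span of `V_D`. -/
noncomputable def projCols {d n : ℕ} (V : Matrix (Fin d) (Fin n) ℝ) (D : Finset (Fin n)) :
    Matrix (Fin d) (Fin d) ℝ :=
  cols V D * ((cols V D)ᵀ * cols V D)⁻¹ * (cols V D)ᵀ

/-!
Write `A = V_T V_Tᵀ = E diag(μ) Eᵀ` and `Q = 1 - P_D`. Since `0 ≤ A ≤ V Vᵀ = 1` and `0 ≤ Q ≤ 1`
in the Loewner order, `tr(Q A) = ∑ μ_i c_i` with `μ_i, c_i = (Eᵀ Q E)_ii ∈ [0, 1]`, so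
`tr(Q A) ≤ ∑_{i<p} c_i + ∑_{i≥p} μ_i`, and `∑_{i<p} c_i = tr(E_bᵀ Q E_b)`.
As `Q V_D = 0`, the matrix `G = E_b - V_D B⁻¹` has `Q G = Q E_b`, and `G = -(1 - E_b E_bᵀ) V_D B⁻¹`.
Hence `tr(E_bᵀ Q E_b) ≤ ‖G‖_F² ≤ ‖B⁻¹‖² ‖(1 - E_b E_bᵀ) V_D‖_F² ≤ ‖B⁻¹‖² tr((1 - E_b E_bᵀ) A)`,
using `V_D V_Dᵀ ≤ A`, and the last trace is `∑_{i≥p} μ_i`.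
-/

open scoped MatrixOrder

section OpNormSq

variable {l m k : Type*} [Fintype l] [Fintype m] [Fintype k]

lemma opNormSq_nonneg (M : Matrix m k ℝ) : 0 ≤ opNormSq M :=
  Real.iSup_nonneg fun _ => by positivity

lemma bddAbove_opNormSq (M : Matrix m k ℝ) :
    BddAbove (Set.range fun x : {x : k → ℝ // ∑ j, x j ^ 2 = 1} => ∑ i, (M *ᵥ x.1) i ^ 2) := by
  refine ⟨∑ i, ∑ j, M i j ^ 2, ?_⟩
  rintro _ ⟨x, rfl⟩
  calc ∑ i, (M *ᵥ x.1) i ^ 2 ≤ ∑ i, (∑ j, M i j ^ 2) * ∑ j, x.1 j ^ 2 :=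
        Finset.sum_le_sum fun i _ => Finset.sum_mul_sq_le_sq_mul_sq _ (M i) x.1
    _ = ∑ i, ∑ j, M i j ^ 2 := by simp [x.2]

lemma sum_sq_mulVec_le_opNormSq_mul (M : Matrix m k ℝ) (y : k → ℝ) :
    ∑ i, (M *ᵥ y) i ^ 2 ≤ opNormSq M * ∑ j, y j ^ 2 := by
  set c := ∑ j, y j ^ 2
  rcases (show 0 ≤ c by positivity).eq_or_lt with hc | hc
  · have hy : y = 0 := funext fun j => by
      simpa using (Finset.sum_eq_zero_iff_of_nonneg fun j _ => sq_nonneg (y j)).mp hc.symm j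
    simp [hy, ← hc]
  have hunit : ∑ j, ((√c)⁻¹ • y) j ^ 2 = 1 := by
    simp only [Pi.smul_apply, smul_eq_mul, mul_pow, ← Finset.mul_sum, inv_pow,
      Real.sq_sqrt hc.le]
    exact inv_mul_cancel₀ hc.ne'
  have hle := le_ciSup (bddAbove_opNormSq M) ⟨_, hunit⟩
  simp only [mulVec_smul, Pi.smul_apply, smul_eq_mul, mul_pow, ← Finset.mul_sum, inv_pow,
    Real.sq_sqrt hc.le] at hle
  rwa [inv_mul_le_iff₀ hc, mul_comm, ← opNormSq] at hle

lemma sum_sq_vecMul_le_opNormSq_mul (M : Matrix m k ℝ) (x : m → ℝ) :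
    ∑ j, (x ᵥ* M) j ^ 2 ≤ opNormSq M * ∑ i, x i ^ 2 := by
  set y := x ᵥ* M
  set a := ∑ j, y j ^ 2
  have ha : a = x ⬝ᵥ M *ᵥ y := by
    rw [dotProduct_mulVec]; simp only [a, sq]; rfl
  have hsq : a ^ 2 ≤ (opNormSq M * ∑ i, x i ^ 2) * a :=
    calc a ^ 2 ≤ (∑ i, x i ^ 2) * ∑ i, (M *ᵥ y) i ^ 2 :=
          ha ▸ Finset.sum_mul_sq_le_sq_mul_sq _ _ _
      _ ≤ (∑ i, x i ^ 2) * (opNormSq M * a) := by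
          gcongr; exact sum_sq_mulVec_le_opNormSq_mul M y
      _ = _ := by ring
  have h0 : 0 ≤ opNormSq M * ∑ i, x i ^ 2 := by have := opNormSq_nonneg M; positivity
  nlinarith [show 0 ≤ a by positivity]

lemma trace_mul_transpose_self_eq_sum_sq (Y : Matrix m k ℝ) :
    trace (Y * Yᵀ) = ∑ i, ∑ j, Y i j ^ 2 := by
  simp [trace, mul_apply, sq]

lemma trace_mul_mul_transpose_le_opNormSq_mul (X : Matrix l m ℝ) (C : Matrix m k ℝ) :
    trace (X * C * (X * C)ᵀ) ≤ opNormSq C * trace (X * Xᵀ) := by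
  rw [trace_mul_transpose_self_eq_sum_sq, trace_mul_transpose_self_eq_sum_sq, Finset.mul_sum]
  exact Finset.sum_le_sum fun i _ => sum_sq_vecMul_le_opNormSq_mul C (X i)

end OpNormSq

namespace Matrix

variable {m n : Type*}

lemma transpose_mul_mul_le_transpose_mul_mul [Fintype m] [Fintype n] {A B : Matrix n n ℝ}
    (h : A ≤ B) (X : Matrix n m ℝ) : Xᵀ * A * X ≤ Xᵀ * B * X := by
  rw [le_iff, ← Matrix.sub_mul, ← Matrix.mul_sub, ← conjTranspose_eq_transpose_of_trivial]
  exact (le_iff.mp h).conjTranspose_mul_mul_same X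

lemma trace_mono [Fintype n] : Monotone (trace : Matrix n n ℝ → ℝ) := fun A B h => by
  have := (le_iff.mp h).trace_nonneg
  rw [trace_sub] at this
  linarith

lemma diag_mono : Monotone (diag : Matrix n n ℝ → n → ℝ) := fun A B h i => by
  have := (le_iff.mp h).diag_nonneg (i := i)
  rw [sub_apply] at this
  exact sub_nonneg.mp this

lemma isStarProjection_iff_transpose [Fintype n] {P : Matrix n n ℝ} :
    IsStarProjection P ↔ P * P = P ∧ Pᵀ = P := by
  rw [isStarProjection_iff, IsIdempotentElem, IsSelfAdjoint, star_eq_conjTranspose,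
    conjTranspose_eq_transpose_of_trivial]

end Matrix

section ColSpanProj

variable {m k k' : Type*} [Fintype m] [Fintype k] [Fintype k'] [DecidableEq k] [DecidableEq k']

noncomputable def colSpanProj (N : Matrix m k ℝ) : Matrix m m ℝ :=
  N * (Nᵀ * N)⁻¹ * Nᵀ

lemma colSpanProj_mul_self {N : Matrix m k ℝ} (hN : IsUnit (Nᵀ * N)) :
    colSpanProj N * N = N := by
  rw [colSpanProj, Matrix.mul_assoc, Matrix.mul_assoc,
    Matrix.nonsing_inv_mul _ ((isUnit_iff_isUnit_det _).mp hN), Matrix.mul_one]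

lemma isStarProjection_colSpanProj {N : Matrix m k ℝ} (hN : IsUnit (Nᵀ * N)) :
    IsStarProjection (colSpanProj N) := by
  refine isStarProjection_iff_transpose.mpr ⟨?_, ?_⟩
  · nth_rw 2 [colSpanProj]
    rw [← Matrix.mul_assoc, ← Matrix.mul_assoc, colSpanProj_mul_self hN, colSpanProj]
  · rw [colSpanProj, transpose_mul, transpose_mul, transpose_transpose, transpose_nonsing_inv,
      transpose_mul, transpose_transpose, Matrix.mul_assoc]

lemma colSpanProj_submatrix (N : Matrix m k ℝ) (e : k' ≃ k) :
    colSpanProj (N.submatrix id e) = colSpanProj N := by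
  rw [colSpanProj, transpose_submatrix, ← submatrix_mul _ _ _ _ _ Function.bijective_id,
    inv_submatrix_equiv, submatrix_mul_equiv, submatrix_mul_equiv]
  rfl

lemma isUnit_transpose_mul_self_of_isUnit_mul {U : Matrix k m ℝ} {N : Matrix m k ℝ}
    (h : IsUnit (U * N)) : IsUnit (Nᵀ * N) := by
  have hN : Function.Injective N.mulVec := Function.Injective.of_comp (f := U.mulVec) <| by
    simpa [Function.comp_def, mulVec_mulVec] using (mulVec_injective_iff_isUnit (A := U * N)).mpr h
  simpa [conjTranspose_eq_transpose_of_trivial] using (PosDef.conjTranspose_mul_self N hN).isUnit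

lemma isStarProjection_mul_transpose {U : Matrix m k ℝ} (hU : Uᵀ * U = 1) :
    IsStarProjection (U * Uᵀ) := by
  refine isStarProjection_iff_transpose.mpr ⟨?_, by rw [transpose_mul, transpose_transpose]⟩
  rw [Matrix.mul_assoc, ← Matrix.mul_assoc Uᵀ, hU, Matrix.one_mul]

end ColSpanProj

theorem trace_transpose_mul_one_sub_colSpanProj_mul_le {m k : Type*} [Fintype m] [DecidableEq m]
    [Fintype k] [DecidableEq k] {A : Matrix m m ℝ} {U N : Matrix m k ℝ} (hU : Uᵀ * U = 1)
    (hB : IsUnit (Uᵀ * N)) (hNA : N * Nᵀ ≤ A) :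
    trace (Uᵀ * (1 - colSpanProj N) * U) ≤ opNormSq (Uᵀ * N)⁻¹ * trace ((1 - U * Uᵀ) * A) := by
  have hNN := isUnit_transpose_mul_self_of_isUnit_mul hB
  have hQ := (isStarProjection_colSpanProj hNN).one_sub
  have hQN : (1 - colSpanProj N) * N = 0 := by
    rw [Matrix.sub_mul, Matrix.one_mul, colSpanProj_mul_self hNN, sub_self]
  obtain ⟨hRR, hRsym⟩ :=
    isStarProjection_iff_transpose.mp (isStarProjection_mul_transpose hU).one_sub
  obtain ⟨hQQ, hQsym⟩ := isStarProjection_iff_transpose.mp hQ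
  set Q := 1 - colSpanProj N
  set B := Uᵀ * N
  set R := 1 - U * Uᵀ
  set G := U - N * B⁻¹
  have hG : G = -(R * N) * B⁻¹ := by
    simp only [G, R, B, Matrix.sub_mul, Matrix.one_mul, Matrix.mul_assoc,
      Matrix.mul_nonsing_inv _ ((isUnit_iff_isUnit_det _).mp hB), Matrix.mul_one, neg_sub]
  have hQG : Q * G = Q * U := by
    rw [Matrix.mul_sub, ← Matrix.mul_assoc, hQN, Matrix.zero_mul, sub_zero]
  have hsq : ∀ Y : Matrix m k ℝ, Yᵀ * Q * Y = (Q * Y)ᵀ * (Q * Y) := fun Y => by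
    rw [transpose_mul, hQsym, Matrix.mul_assoc Yᵀ Q (Q * Y), ← Matrix.mul_assoc Q Q, hQQ,
      Matrix.mul_assoc]
  have hRNNR : -(R * N) * (-(R * N))ᵀ = Rᵀ * (N * Nᵀ) * R := by
    rw [transpose_neg, Matrix.neg_mul, Matrix.mul_neg, neg_neg, transpose_mul, hRsym]
    simp only [Matrix.mul_assoc]
  calc trace (Uᵀ * Q * U) = trace (Gᵀ * Q * G) := by rw [hsq, hsq, hQG]
    _ ≤ trace (Gᵀ * 1 * G) := trace_mono (transpose_mul_mul_le_transpose_mul_mul hQ.le_one G)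
    _ = trace (G * Gᵀ) := by rw [Matrix.mul_one, trace_mul_comm]
    _ ≤ opNormSq B⁻¹ * trace (-(R * N) * (-(R * N))ᵀ) := by
      rw [hG]; exact trace_mul_mul_transpose_le_opNormSq_mul _ _
    _ ≤ opNormSq B⁻¹ * trace (Rᵀ * A * R) := by
      rw [hRNNR]
      exact mul_le_mul_of_nonneg_left
        (trace_mono (transpose_mul_mul_le_transpose_mul_mul hNA R)) (opNormSq_nonneg _)
    _ = opNormSq B⁻¹ * trace (R * A) := by
      rw [trace_mul_comm, ← Matrix.mul_assoc, hRsym, hRR]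

lemma sum_mul_le_sum_filter_not_add_sum_filter {ι : Type*} [Fintype ι] (q : ι → Prop)
    [DecidablePred q] {μ c : ι → ℝ} (hμ : ∀ i, μ i ∈ Set.Icc 0 1) (hc : ∀ i, c i ∈ Set.Icc 0 1) :
    ∑ i, μ i * c i ≤ ∑ i ∈ Finset.univ.filter (fun i => ¬ q i), c i +
      ∑ i ∈ Finset.univ.filter q, μ i := by
  rw [← Finset.sum_filter_add_sum_filter_not Finset.univ q, add_comm]
  gcongr with i _ i _
  · exact mul_le_of_le_one_left (hc i).1 (hμ i).2
  · exact mul_le_of_le_one_right (hμ i).1 (hc i).2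

lemma transpose_mul_mul_diag_mem_Icc {m n : Type*} [Fintype m] [DecidableEq m] [Fintype n]
    [DecidableEq n] {S : Matrix n n ℝ}
    (hS : S ∈ Set.Icc 0 1) {E : Matrix n m ℝ} (hE : Eᵀ * E = 1) (i : m) :
    (Eᵀ * S * E) i i ∈ Set.Icc 0 1 := by
  refine ⟨?_, ?_⟩
  · simpa using diag_mono (transpose_mul_mul_le_transpose_mul_mul hS.1 E) i
  · simpa [hE] using diag_mono (transpose_mul_mul_le_transpose_mul_mul hS.2 E) i

lemma trace_mul_mul_diagonal_mul_transpose {n : Type*} [Fintype n] [DecidableEq n]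
    (Q E : Matrix n n ℝ) (μ : n → ℝ) :
    trace (Q * (E * diagonal μ * Eᵀ)) = ∑ i, μ i * (Eᵀ * Q * E) i i := by
  rw [← Matrix.mul_assoc, trace_mul_comm, ← Matrix.mul_assoc, ← Matrix.mul_assoc]
  simp [trace, mul_diagonal, mul_comm]

lemma transpose_mul_mul_eq_diagonal {n : Type*} [Fintype n] [DecidableEq n]
    {A E : Matrix n n ℝ} {μ : n → ℝ} (hE : Eᵀ * E = 1) (hA : A = E * diagonal μ * Eᵀ) :
    Eᵀ * A * E = diagonal μ := by
  rw [hA, ← Matrix.mul_assoc, ← Matrix.mul_assoc, hE, Matrix.one_mul, Matrix.mul_assoc, hE,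
    Matrix.mul_one]

lemma submatrix_transpose_mul_mul_submatrix {m n k : Type*} [Fintype m] (E : Matrix m n ℝ)
    (S : Matrix m m ℝ) (f : k → n) :
    (E.submatrix id f)ᵀ * S * E.submatrix id f = (Eᵀ * S * E).submatrix f f := by
  ext i j
  simp [mul_apply]

section Columns

variable {d n : ℕ}

lemma cols_mul_transpose (V : Matrix (Fin d) (Fin n) ℝ) (S : Finset (Fin n)) :
    cols V S * (cols V S)ᵀ = V * diagonal (fun j => if j ∈ S then (1 : ℝ) else 0) * Vᵀ := by
  ext i k
  simp [mul_apply, cols, diagonal_apply, Finset.sum_attach S (fun j => V i j * V k j),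
    Finset.sum_ite_mem]

lemma monotone_cols_mul_transpose (V : Matrix (Fin d) (Fin n) ℝ) :
    Monotone fun S : Finset (Fin n) => cols V S * (cols V S)ᵀ := by
  intro S S' hS
  have hdiag : diagonal (fun j => if j ∈ S then (1 : ℝ) else 0) ≤
      diagonal (fun j => if j ∈ S' then 1 else 0) := by
    rw [le_iff, diagonal_sub]
    refine PosSemidef.diagonal fun j => ?_
    have := @hS j
    simp only [Pi.zero_apply]
    split_ifs <;> simp_all
  simpa [cols_mul_transpose] using transpose_mul_mul_le_transpose_mul_mul hdiag Vᵀ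

lemma cols_mul_transpose_mem_Icc {V : Matrix (Fin d) (Fin n) ℝ} (hV : V * Vᵀ = 1)
    (S : Finset (Fin n)) : cols V S * (cols V S)ᵀ ∈ Set.Icc 0 1 :=
  ⟨by simpa [cols_mul_transpose] using monotone_cols_mul_transpose V (Finset.empty_subset S),
    by simpa [cols_mul_transpose, hV] using monotone_cols_mul_transpose V (Finset.subset_univ S)⟩

end Columns

section TopEigenvectors

variable {d p : ℕ} (hpd : p ≤ d)

lemma sum_castLE_eq_sum_filter {M : Type*} [AddCommMonoid M] (f : Fin d → M) :
    ∑ j : Fin p, f (Fin.castLE hpd j) =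
      ∑ i ∈ Finset.univ.filter (fun i : Fin d => ¬ p ≤ (i : ℕ)), f i :=
  Finset.sum_nbij (Fin.castLE hpd) (by simp) (Fin.castLE_injective hpd).injOn
    (fun i hi => ⟨⟨i, by simpa using hi⟩, by simp, rfl⟩) (fun _ _ => rfl)

lemma trace_transpose_mul_mul_submatrix_castLE (E S : Matrix (Fin d) (Fin d) ℝ) :
    trace ((E.submatrix id (Fin.castLE hpd))ᵀ * S * E.submatrix id (Fin.castLE hpd)) =
      ∑ i ∈ Finset.univ.filter (fun i : Fin d => ¬ p ≤ (i : ℕ)), (Eᵀ * S * E) i i := by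
  rw [submatrix_transpose_mul_mul_submatrix, ← sum_castLE_eq_sum_filter hpd]
  rfl

lemma transpose_mul_submatrix_castLE {E : Matrix (Fin d) (Fin d) ℝ} (hE : Eᵀ * E = 1) :
    (E.submatrix id (Fin.castLE hpd))ᵀ * E.submatrix id (Fin.castLE hpd) = 1 := by
  simpa [hE, submatrix_one _ (Fin.castLE_injective hpd)] using
    submatrix_transpose_mul_mul_submatrix E 1 (Fin.castLE hpd)

lemma trace_one_sub_mul_diagonal_conj {E : Matrix (Fin d) (Fin d) ℝ} (hE : Eᵀ * E = 1)
    (μ : Fin d → ℝ) :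
    trace ((1 - E.submatrix id (Fin.castLE hpd) * (E.submatrix id (Fin.castLE hpd))ᵀ) *
      (E * diagonal μ * Eᵀ)) = ∑ i ∈ Finset.univ.filter (fun i : Fin d => p ≤ (i : ℕ)), μ i := by
  have htotal : trace (E * diagonal μ * Eᵀ) = ∑ i, μ i := by
    rw [trace_mul_comm, ← Matrix.mul_assoc, hE, Matrix.one_mul, trace_diagonal]
  set Eb := E.submatrix id (Fin.castLE hpd)
  set A := E * diagonal μ * Eᵀ with hA
  have htop : trace (Eb * Ebᵀ * A) =
      ∑ i ∈ Finset.univ.filter (fun i : Fin d => ¬ p ≤ (i : ℕ)), μ i := by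
    rw [Matrix.mul_assoc, trace_mul_comm, trace_transpose_mul_mul_submatrix_castLE,
      transpose_mul_mul_eq_diagonal hE hA]
    simp
  rw [Matrix.sub_mul, Matrix.one_mul, trace_sub, htotal, htop,
    ← Finset.sum_filter_add_sum_filter_not Finset.univ (fun i : Fin d => p ≤ (i : ℕ)),
    add_sub_cancel_right]

end TopEigenvectors

theorem proj_bound_sigma_general {d n : ℕ} (V : Matrix (Fin d) (Fin n) ℝ)
    (hV : V * Vᵀ = 1) (T : Finset (Fin n)) (p : ℕ) (hpd : p ≤ d)
    (μ : Fin d → ℝ)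
    (E : Matrix (Fin d) (Fin d) ℝ) (hEorth : Eᵀ * E = 1)
    (hdecomp : cols V T * (cols V T)ᵀ = E * Matrix.diagonal μ * Eᵀ)
    (Eb : Matrix (Fin d) (Fin p) ℝ)
    (hEb : ∀ i (j : Fin p), Eb i j = E i (Fin.castLE hpd j))
    (D : Finset (Fin n)) (hDT : D ⊆ T) (hDcard : D.card = p)
    (B : Matrix (Fin p) (Fin p) ℝ)
    (hB : ∀ (i : Fin p) (j : Fin p),
      B i j = (Ebᵀ * cols V D) i ((D.equivFin.trans (finCongr hDcard)).symm j))
    (hBinv : IsUnit B.det) :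
    Matrix.trace ((1 - projCols V D) * (cols V T * (cols V T)ᵀ))
      ≤ (1 + opNormSq B⁻¹) *
        ∑ i ∈ Finset.univ.filter (fun i : Fin d => p ≤ (i : ℕ)), μ i := by
  set N := (cols V D).submatrix id (D.equivFin.trans (finCongr hDcard)).symm
  have hEb' : Eb = E.submatrix id (Fin.castLE hpd) := Matrix.ext hEb
  have hBN : B = Ebᵀ * N := Matrix.ext fun i j => hB i j
  have hBunit : IsUnit (Ebᵀ * N) := hBN ▸ (isUnit_iff_isUnit_det B).mpr hBinv
  have hP : projCols V D = colSpanProj N := (colSpanProj_submatrix _ _).symm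
  have hQ := (isStarProjection_colSpanProj (isUnit_transpose_mul_self_of_isUnit_mul hBunit)).one_sub
  have hNA : N * Nᵀ ≤ cols V T * (cols V T)ᵀ := by
    simp only [N, transpose_submatrix, submatrix_mul_equiv, submatrix_id_id]
    exact monotone_cols_mul_transpose V hDT
  have hμ (i : Fin d) : μ i ∈ Set.Icc 0 1 := by
    simpa [transpose_mul_mul_eq_diagonal hEorth hdecomp] using
      transpose_mul_mul_diag_mem_Icc (cols_mul_transpose_mem_Icc hV T) hEorth i
  have hhead : ∑ i ∈ Finset.univ.filter (fun i : Fin d => ¬ p ≤ (i : ℕ)),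
      (Eᵀ * (1 - colSpanProj N) * E) i i ≤
        opNormSq B⁻¹ * ∑ i ∈ Finset.univ.filter (fun i : Fin d => p ≤ (i : ℕ)), μ i := by
    rw [← trace_transpose_mul_mul_submatrix_castLE hpd,
      ← trace_one_sub_mul_diagonal_conj hpd hEorth, ← hdecomp, ← hEb', hBN]
    exact trace_transpose_mul_one_sub_colSpanProj_mul_le
      (hEb' ▸ transpose_mul_submatrix_castLE hpd hEorth) hBunit hNA
  rw [hP, hdecomp, trace_mul_mul_diagonal_mul_transpose]
  refine (sum_mul_le_sum_filter_not_add_sum_filter (fun i : Fin d => p ≤ (i : ℕ)) hμ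
    (transpose_mul_mul_diag_mem_Icc hQ.mem_Icc hEorth)).trans ?_
  linarith

/-- Projection bound: if `V Vᵀ = I_d`, `μ₁ ≥ ... ≥ μ_d` are the eigenvalues of
`V_T V_Tᵀ`, `E_b` is the matrix of orthonormal eigenvectors for the `p` largest
eigenvalues, and `D ⊆ T` with `|D| = p` is such that `V_D` has full column rank and
`E_bᵀ V_D` is invertible, then
`tr[(I − P_D) V_T V_Tᵀ] ≤ (1 + ‖(E_bᵀ V_D)⁻¹‖_op²)·Σ_{i>p} μ_i`. -/
theorem proj_bound_sigma {d n : ℕ} (V : Matrix (Fin d) (Fin n) ℝ)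
    (hV : V * Vᵀ = 1) (T : Finset (Fin n)) (p : ℕ) (hpd : p ≤ d)
    (μ : Fin d → ℝ) (hμmono : Antitone μ)
    (E : Matrix (Fin d) (Fin d) ℝ) (hEorth : Eᵀ * E = 1)
    (hdecomp : cols V T * (cols V T)ᵀ = E * Matrix.diagonal μ * Eᵀ)
    (Eb : Matrix (Fin d) (Fin p) ℝ)
    (hEb : ∀ i (j : Fin p), Eb i j = E i (Fin.castLE hpd j))
    (D : Finset (Fin n)) (hDT : D ⊆ T) (hDcard : D.card = p)
    (hrank : (cols V D).rank = p)
    (B : Matrix (Fin p) (Fin p) ℝ)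
    (hB : ∀ (i : Fin p) (j : Fin p),
      B i j = (Ebᵀ * cols V D) i ((D.equivFin.trans (finCongr hDcard)).symm j))
    (hBinv : IsUnit B.det) :
    Matrix.trace ((1 - projCols V D) * (cols V T * (cols V T)ᵀ))
      ≤ (1 + opNormSq B⁻¹) *
        ∑ i ∈ Finset.univ.filter (fun i : Fin d => p ≤ (i : ℕ)), μ i :=
  proj_bound_sigma_general V hV T p hpd μ E hEorth hdecomp Eb hEb D hDT hDcard B hB hBinv
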